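/- The function s ↦ H(softmax s) from ℝ^K to ℝ is differentiable, and its gradient at s ∈ ℝ^K has j-th component −(softmax s)_j · (log (softmax s)_j + H(softmax s)) for each j ∈ {1, …, K}. -/

import Mathlib

open Real BigOperators

/-- The softmax map on `ℝ^K`. -/
noncomputable def softmax {K : ℕ} (s : EuclideanSpace ℝ (Fin K)) : EuclideanSpace ℝ (Fin K) :=
  (WithLp.equiv 2 (Fin K → ℝ)).symm fun k => Real.exp (s k) / ∑ j, Real.exp (s j)

/-- Cross-entropy `H(p, q) = -∑ k, p k * log (q k)`. -/
noncomputable def crossEntropy {K : ℕ} (p q : EuclideanSpace ℝ (Fin K)) : ℝ :=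
  -∑ k, p k * Real.log (q k)

/-- Entropy `H(p) = -∑ k, p k * log (p k)`. -/
noncomputable def entropy {K : ℕ} (p : EuclideanSpace ℝ (Fin K)) : ℝ :=
  -∑ k, p k * Real.log (p k)

/-- A probability vector: nonnegative components summing to 1. -/
def IsProbVec {K : ℕ} (p : EuclideanSpace ℝ (Fin K)) : Prop :=
  (∀ k, 0 ≤ p k) ∧ ∑ k, p k = 1

/-- The uniform distribution `u_K`, with every component `1/K`. -/
noncomputable def uniformDist (K : ℕ) : EuclideanSpace ℝ (Fin K) :=
  (WithLp.equiv 2 (Fin K → ℝ)).symm fun _ => 1 / (K : ℝ)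

/-!
With `Z = ∑ₖ exp sₖ` and `N = ∑ₖ sₖ exp sₖ`, one has `log (softmax s)ⱼ = sⱼ - log Z`, hence
`H(softmax s) = log Z - N / Z`. Both `Z` and `N` are sums of functions of single coordinates, so
the chain rule gives the gradient `-(softmax s)ⱼ (sⱼ - N / Z)`, and `sⱼ - N / Z` is exactly
`log (softmax s)ⱼ + H(softmax s)`.
-/

open InnerProductSpace

section GradientCalculus

variable {F : Type*} [NormedAddCommGroup F] [InnerProductSpace ℝ F] [CompleteSpace F]
  {f g : F → ℝ} {f' g' x : F}

theorem HasGradientAt.sub (hf : HasGradientAt f f' x) (hg : HasGradientAt g g' x) :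
    HasGradientAt (fun x => f x - g x) (f' - g') x := by
  rw [hasGradientAt_iff_hasFDerivAt, map_sub]
  exact hf.hasFDerivAt.sub hg.hasFDerivAt

theorem HasGradientAt.mul (hf : HasGradientAt f f' x) (hg : HasGradientAt g g' x) :
    HasGradientAt (fun x => f x * g x) (f x • g' + g x • f') x := by
  rw [hasGradientAt_iff_hasFDerivAt, map_add, map_smul, map_smul]
  exact hf.hasFDerivAt.fun_mul hg.hasFDerivAt

theorem HasDerivAt.comp_hasGradientAt (x : F) {φ : ℝ → ℝ} {φ' : ℝ} (hφ : HasDerivAt φ φ' (f x))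
    (hf : HasGradientAt f f' x) : HasGradientAt (fun x => φ (f x)) (φ' • f') x := by
  rw [hasGradientAt_iff_hasFDerivAt, map_smul]
  exact hφ.comp_hasFDerivAt x hf.hasFDerivAt

end GradientCalculus

theorem EuclideanSpace.hasGradientAt_sum_comp_apply {ι : Type*} [Fintype ι] {φ : ι → ℝ → ℝ}
    {φ' : ι → ℝ} {s : EuclideanSpace ℝ ι} (hφ : ∀ k, HasDerivAt (φ k) (φ' k) (s k)) :
    HasGradientAt (fun s : EuclideanSpace ℝ ι => ∑ k, φ k (s k)) (WithLp.toLp 2 φ') s := by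
  have hsum : toDual ℝ _ (WithLp.toLp 2 φ') = ∑ k, φ' k • EuclideanSpace.proj (𝕜 := ℝ) k := by
    ext v
    simp [toDual_apply_apply, PiLp.inner_apply, mul_comm]
  rw [hasGradientAt_iff_hasFDerivAt, hsum]
  exact HasFDerivAt.fun_sum fun k _ =>
    (hφ k).comp_hasFDerivAt s (EuclideanSpace.proj k : EuclideanSpace ℝ ι →L[ℝ] ℝ).hasFDerivAt

section Softmax

variable {K : ℕ}

theorem softmax_apply (s : EuclideanSpace ℝ (Fin K)) (k : Fin K) :
    softmax s k = exp (s k) / ∑ j, exp (s j) := rfl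

theorem sum_exp_pos [NeZero K] (s : EuclideanSpace ℝ (Fin K)) : 0 < ∑ k, exp (s k) :=
  Finset.sum_pos (fun k _ => exp_pos (s k)) Finset.univ_nonempty

theorem log_softmax_apply [NeZero K] (s : EuclideanSpace ℝ (Fin K)) (k : Fin K) :
    log (softmax s k) = s k - log (∑ j, exp (s j)) := by
  rw [softmax_apply, log_div (exp_ne_zero _) (sum_exp_pos s).ne', log_exp]

theorem sum_softmax [NeZero K] (s : EuclideanSpace ℝ (Fin K)) : ∑ k, softmax s k = 1 := by
  simp only [softmax_apply, ← Finset.sum_div, div_self (sum_exp_pos s).ne']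

theorem entropy_softmax_eq [NeZero K] (s : EuclideanSpace ℝ (Fin K)) :
    entropy (softmax s) = log (∑ k, exp (s k)) - (∑ k, s k * exp (s k)) / ∑ k, exp (s k) :=
  calc entropy (softmax s)
      = log (∑ k, exp (s k)) * ∑ k, softmax s k - ∑ k, s k * softmax s k := by
        simp only [entropy, log_softmax_apply, Finset.mul_sum, ← Finset.sum_sub_distrib,
          ← Finset.sum_neg_distrib]
        congr 1; ext k; ring
    _ = _ := by
        rw [sum_softmax, mul_one, Finset.sum_div]
        simp only [softmax_apply, mul_div_assoc]

theorem hasGradientAt_entropy_softmax [NeZero K] (s : EuclideanSpace ℝ (Fin K)) :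
    HasGradientAt (fun s => entropy (softmax s))
      (WithLp.toLp 2 fun j => -softmax s j * (log (softmax s j) + entropy (softmax s))) s := by
  have hZ_ne := (sum_exp_pos s).ne'
  have hZ : HasGradientAt (fun s : EuclideanSpace ℝ (Fin K) => ∑ k, exp (s k))
      (WithLp.toLp 2 fun k => exp (s k)) s :=
    EuclideanSpace.hasGradientAt_sum_comp_apply fun k => hasDerivAt_exp (s k)
  have hN : HasGradientAt (fun s : EuclideanSpace ℝ (Fin K) => ∑ k, s k * exp (s k))
      (WithLp.toLp 2 fun k => 1 * exp (s k) + s k * exp (s k)) s :=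
    EuclideanSpace.hasGradientAt_sum_comp_apply fun k =>
      (hasDerivAt_id (s k)).mul (hasDerivAt_exp (s k))
  have h := ((hasDerivAt_log hZ_ne).comp_hasGradientAt s hZ).sub
    (hN.mul ((hasDerivAt_inv hZ_ne).comp_hasGradientAt s hZ))
  convert h using 1
  · funext s
    rw [entropy_softmax_eq, div_eq_mul_inv]
  · ext j
    simp only [PiLp.sub_apply, PiLp.add_apply, PiLp.smul_apply, smul_eq_mul]
    rw [log_softmax_apply, entropy_softmax_eq, softmax_apply]
    field_simp
    ring

end Softmax

/-- The map `s ↦ H(softmax s)` is differentiable, and the `j`-th component of its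
gradient at `s` is `-(softmax s)_j * (log (softmax s)_j + H(softmax s))`. -/
theorem entropy_softmax_differentiable_and_gradient (K : ℕ) (hK : 1 ≤ K) :
    Differentiable ℝ (fun s : EuclideanSpace ℝ (Fin K) => entropy (softmax s)) ∧
      ∀ s : EuclideanSpace ℝ (Fin K), ∀ j : Fin K,
        gradient (fun s => entropy (softmax s)) s j =
          -(softmax s j) * (Real.log (softmax s j) + entropy (softmax s)) := by
  have : NeZero K := ⟨by omega⟩
  refine ⟨fun s => (hasGradientAt_entropy_softmax s).differentiableAt, fun s j => ?_⟩
  rw [(hasGradientAt_entropy_softmax s).gradient]
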